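/- arXiv:1608.04861 — 3 statements merged into one kernel-verified Lean document; each statement's English description precedes it below -/
import Mathlib

section
/- Let X_1,...,X_m and W_1,...,W_N be i.i.d. Rademacher variables and 0 < x < 1. With A = (1−x)/(1+x), E[∏_{i,j} (1 + x X_i W_j)] = (1 − x²)^{mN/2} · E_Q[ ((1/2)A^{Q−N/2} + (1/2)A^{N/2−Q})^m ] where Q ∼ Binomial(N, 1/2). -/
/-!
Almost surely the vector `(X, W)` is a sign pattern, and by independence each of the
`2 ^ (m + N)` patterns has probability `2 ^ -(m + N)`, so the left side is an average over
patterns. Fix the pattern of `W` and let `q` be its number of `+1`'s. The product over `j`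
is then `P = (1 + x) ^ q (1 - x) ^ (N - q)` when `X i = 1` and the swapped `M` when `X i = -1`,
so summing over the pattern of `X` gives `(P + M) ^ m`. The result depends on the pattern of `W`
only through `q`, which is taken by `N.choose q` patterns, i.e. `q` is `Binomial(N, 1/2)`.
Finally `P = (1 - x²) ^ (N / 2) * A ^ (N / 2 - q)` and `M = (1 - x²) ^ (N / 2) * A ^ (q - N / 2)`.
-/

open MeasureTheory ProbabilityTheory Finset

def IsRademacher {Ω : Type*} [MeasurableSpace Ω] (Z : Ω → ℝ) (μ : Measure Ω) : Prop :=
  μ {ω | Z ω = 1} = 1 / 2 ∧ μ {ω | Z ω = -1} = 1 / 2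

section SignVec

variable {ι : Type*} [DecidableEq ι]

def signVec (t : Finset ι) (k : ι) : ℝ := if k ∈ t then 1 else -1

lemma signVec_eq_one_iff {t : Finset ι} {k : ι} : signVec t k = 1 ↔ k ∈ t := by
  unfold signVec
  split_ifs with hk <;> norm_num [hk]

lemma signVec_injective : Function.Injective (signVec : Finset ι → ι → ℝ) := by
  intro t t' h
  ext k
  rw [← signVec_eq_one_iff, h, signVec_eq_one_iff]

end SignVec

lemma integral_comp_eq_sum_of_ae_mem {Ω α : Type*} [MeasurableSpace Ω] [MeasurableSpace α]
    [MeasurableSingletonClass α] {μ : Measure Ω} [IsFiniteMeasure μ] {Y : Ω → α}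
    (hY : Measurable Y) {s : Finset α} (hs : ∀ᵐ ω ∂μ, Y ω ∈ s) (f : α → ℝ) :
    ∫ ω, f (Y ω) ∂μ = ∑ a ∈ s, μ.real (Y ⁻¹' {a}) * f a := by
  have hfiber : ∀ a, MeasurableSet (Y ⁻¹' {a}) := fun a => hY (measurableSet_singleton a)
  have hdecomp : (fun ω => f (Y ω)) =ᵐ[μ]
      fun ω => ∑ a ∈ s, (Y ⁻¹' {a}).indicator (fun _ => f a) ω := by
    filter_upwards [hs] with ω hω
    classical
    simp only [Set.indicator_apply, Set.mem_preimage, Set.mem_singleton_iff]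
    rw [sum_ite_eq s _ _, if_pos hω]
  rw [integral_congr_ae hdecomp,
    integral_finsetSum _ fun a _ => (integrable_const (f a)).indicator (hfiber a)]
  simp [integral_indicator_const _ (hfiber _), mul_comm]

section Rademacher

variable {Ω : Type*} [MeasurableSpace Ω] {μ : Measure Ω}

lemma IsRademacher.ae_eq_one_or_eq_neg_one [IsProbabilityMeasure μ] {Z : Ω → ℝ}
    (hZ : Measurable Z) (hRad : IsRademacher Z μ) : ∀ᵐ ω ∂μ, Z ω = 1 ∨ Z ω = -1 := by
  have hmeas : ∀ c : ℝ, MeasurableSet {ω | Z ω = c} := fun c => hZ (measurableSet_singleton c)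
  change ∀ᵐ ω ∂μ, ω ∈ {ω | Z ω = 1} ∪ {ω | Z ω = -1}
  rw [ae_mem_iff_measure_eq ((hmeas 1).union (hmeas (-1))).nullMeasurableSet, measure_univ,
    measure_union _ (hmeas (-1)), hRad.1, hRad.2, ENNReal.add_halves]
  exact Set.disjoint_left.2 fun ω (h1 : Z ω = 1) (h2 : Z ω = -1) => by norm_num [h1] at h2

variable {ι : Type*} [Fintype ι] [DecidableEq ι] {Y : ι → Ω → ℝ}

lemma measure_preimage_signVec (hind : iIndepFun Y μ) (hRad : ∀ k, IsRademacher (Y k) μ)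
    (t : Finset ι) : μ ((fun ω k => Y k ω) ⁻¹' {signVec t}) = (1 / 2) ^ Fintype.card ι := by
  have hinter :
      (fun ω k => Y k ω) ⁻¹' {signVec t} = ⋂ k ∈ univ, Y k ⁻¹' {signVec t k} := by
    ext ω
    simp [funext_iff]
  rw [hinter, hind.measure_inter_preimage_eq_mul _ fun k _ => measurableSet_singleton _,
    ← card_univ, ← prod_const]
  refine prod_congr rfl fun k _ => ?_
  by_cases hk : k ∈ t
  · rw [signVec, if_pos hk]
    exact (hRad k).1
  · rw [signVec, if_neg hk]
    exact (hRad k).2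

theorem integral_comp_rademacher [IsProbabilityMeasure μ] (hY : ∀ k, Measurable (Y k))
    (hind : iIndepFun Y μ) (hRad : ∀ k, IsRademacher (Y k) μ) (F : (ι → ℝ) → ℝ) :
    ∫ ω, F (fun k => Y k ω) ∂μ
      = (1 / 2) ^ Fintype.card ι * ∑ t : Finset ι, F (signVec t) := by
  have hsigns : ∀ᵐ ω ∂μ, (fun k => Y k ω) ∈ univ.image signVec := by
    filter_upwards [ae_all_iff.2 fun k => (hRad k).ae_eq_one_or_eq_neg_one (hY k)] with ω hω
    refine mem_image.2 ⟨univ.filter fun k => Y k ω = 1, mem_univ _, funext fun k => ?_⟩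
    rcases hω k with h | h <;> norm_num [signVec, h]
  rw [integral_comp_eq_sum_of_ae_mem (measurable_pi_lambda _ hY) hsigns,
    sum_image fun t _ t' _ h => signVec_injective h, mul_sum]
  refine sum_congr rfl fun t _ => ?_
  simp [measureReal_def, measure_preimage_signVec hind hRad t]

end Rademacher

lemma integral_comp_of_binomial {Ω : Type*} [MeasurableSpace Ω] {μ : Measure Ω}
    [IsFiniteMeasure μ] {Q : Ω → ℕ} (hQm : Measurable Q) {N : ℕ}
    (hQ : ∀ j : ℕ, μ {ω | Q ω = j} = ENNReal.ofReal ((N.choose j : ℝ) * (1 / 2 : ℝ) ^ N))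
    (g : ℕ → ℝ) :
    ∫ ω, g (Q ω) ∂μ = ∑ q ∈ range (N + 1), (N.choose q : ℝ) * (1 / 2) ^ N * g q := by
  have hfiber : ∀ j, Q ⁻¹' {j} = {ω | Q ω = j} := fun j => rfl
  have hQN : ∀ᵐ ω ∂μ, Q ω ∈ range (N + 1) := by
    change μ (Q ⁻¹' {j | j ∉ range (N + 1)}) = 0
    refine (measure_preimage_eq_zero_iff_of_countable (Set.to_countable _)).2 fun j hj => ?_
    rw [hfiber, hQ, Nat.choose_eq_zero_of_lt (by simpa using hj)]
    simp
  rw [integral_comp_eq_sum_of_ae_mem hQm hQN]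
  refine sum_congr rfl fun q _ => ?_
  rw [measureReal_def, hfiber, hQ, ENNReal.toReal_ofReal (by positivity)]

section FinsetSums

variable {ι : Type*} [Fintype ι]

lemma prod_ite_mem_eq_pow_mul_pow [DecidableEq ι] {M : Type*} [CommMonoid M] (t : Finset ι)
    (a b : M) : ∏ i, (if i ∈ t then a else b) = a ^ #t * b ^ (Fintype.card ι - #t) := by
  rw [prod_ite, prod_const, prod_const, filter_mem_eq_inter, univ_inter, ← card_compl,
    filter_not, filter_mem_eq_inter, univ_inter, compl_eq_univ_sdiff]

lemma sum_prod_ite_mem [DecidableEq ι] {R : Type*} [CommSemiring R] (a b : R) :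
    ∑ t : Finset ι, ∏ i, (if i ∈ t then a else b) = (a + b) ^ Fintype.card ι := by
  rw [← card_univ, ← prod_const, Fintype.prod_add]
  refine sum_congr rfl fun t _ => ?_
  rw [prod_ite_mem_eq_pow_mul_pow, prod_const, prod_const, card_compl]

lemma sum_finset_apply_card {M : Type*} [AddCommMonoid M] (f : ℕ → M) :
    ∑ t : Finset ι, f #t
      = ∑ q ∈ range (Fintype.card ι + 1), (Fintype.card ι).choose q • f q := by
  simpa [powerset_univ] using sum_powerset_apply_card f (x := (univ : Finset ι))

end FinsetSums

lemma sum_prod_one_add_mul_signVec_mul_signVec {ι κ : Type*} [Fintype ι] [DecidableEq ι]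
    [Fintype κ] [DecidableEq κ] (x : ℝ) :
    ∑ t : Finset (ι ⊕ κ), ∏ i, ∏ j, (1 + x * signVec t (.inl i) * signVec t (.inr j))
      = ∑ q ∈ range (Fintype.card κ + 1), (Fintype.card κ).choose q *
          ((1 + x) ^ q * (1 - x) ^ (Fintype.card κ - q)
            + (1 - x) ^ q * (1 + x) ^ (Fintype.card κ - q)) ^ Fintype.card ι := by
  rw [← (sumEquiv.symm : Finset ι × Finset κ ≃o Finset (ι ⊕ κ)).toEquiv.sum_comp,
    Fintype.sum_prod_type_right]
  have hrow : ∀ (a : Finset ι) (b : Finset κ) (i : ι),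
      ∏ j, (1 + x * signVec (a.disjSum b) (.inl i) * signVec (a.disjSum b) (.inr j))
        = if i ∈ a then (1 + x) ^ #b * (1 - x) ^ (Fintype.card κ - #b)
          else (1 - x) ^ #b * (1 + x) ^ (Fintype.card κ - #b) := by
    intro a b i
    split_ifs with hi <;> rw [← prod_ite_mem_eq_pow_mul_pow] <;>
      exact prod_congr rfl fun j _ => by
        by_cases hj : j ∈ b <;> simp [signVec, hi, hj, sub_eq_add_neg]
  simp only [OrderIso.toEquiv_symm, OrderIso.coe_symm_toEquiv, sumEquiv_symm_apply, hrow,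
    sum_prod_ite_mem]
  rw [sum_finset_apply_card fun q => ((1 + x) ^ q * (1 - x) ^ (Fintype.card κ - q)
    + (1 - x) ^ q * (1 + x) ^ (Fintype.card κ - q)) ^ Fintype.card ι]
  simp only [nsmul_eq_mul]

lemma half_mul_pow_add_pow_eq_rpow {a b : ℝ} (ha : 0 < a) (hb : 0 < b) {q N : ℕ}
    (hq : q ≤ N) :
    1 / 2 * (a ^ q * b ^ (N - q) + b ^ q * a ^ (N - q))
      = (a * b) ^ ((N : ℝ) / 2)
        * (1 / 2 * (b / a) ^ ((q : ℝ) - N / 2) + 1 / 2 * (b / a) ^ ((N : ℝ) / 2 - q)) := by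
  have hsqrt : ∀ {c : ℝ}, 0 < c → c ^ ((N : ℝ) / 2) * c ^ ((N : ℝ) / 2) = c ^ N :=
    fun hc => by
      rw [← Real.rpow_add hc, add_halves, Real.rpow_natCast]
  have hNa := (Real.rpow_pos_of_pos ha ((N : ℝ) / 2)).ne'
  have hNb := (Real.rpow_pos_of_pos hb ((N : ℝ) / 2)).ne'
  rw [Real.mul_rpow ha.le hb.le, Real.div_rpow hb.le ha.le, Real.div_rpow hb.le ha.le,
    Real.rpow_sub ha, Real.rpow_sub hb, Real.rpow_sub ha, Real.rpow_sub hb, Real.rpow_natCast,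
    Real.rpow_natCast, pow_sub₀ _ hb.ne' hq, pow_sub₀ _ ha.ne' hq, ← hsqrt ha, ← hsqrt hb]
  field_simp
  ring

/-- Closed-form reduction of the Rademacher product expectation to a binomial
average, with `A = (1-x)/(1+x)`. -/
theorem stmt_4
    {Ω Ω' : Type*} [MeasurableSpace Ω] [MeasurableSpace Ω']
    (μ : Measure Ω) (μ' : Measure Ω')
    [IsProbabilityMeasure μ] [IsProbabilityMeasure μ']
    (m N : ℕ) (x : ℝ) (hx0 : 0 < x) (hx1 : x < 1)
    (X : Fin m → Ω → ℝ) (W : Fin N → Ω → ℝ)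
    (hmX : ∀ i, Measurable (X i)) (hmW : ∀ j, Measurable (W j))
    (hindep : iIndepFun (Sum.elim X W) μ)
    (hRadX : ∀ i, μ {ω | X i ω = 1} = 1/2 ∧ μ {ω | X i ω = -1} = 1/2)
    (hRadW : ∀ j, μ {ω | W j ω = 1} = 1/2 ∧ μ {ω | W j ω = -1} = 1/2)
    (Q : Ω' → ℕ) (hmQ : Measurable Q)
    (hQ : ∀ j : ℕ, μ' {ω | Q ω = j}
        = ENNReal.ofReal ((N.choose j : ℝ) * (1 / 2 : ℝ) ^ N))
    (A : ℝ) (hA : A = (1 - x) / (1 + x)) :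
    ∫ ω, ∏ i, ∏ j, (1 + x * X i ω * W j ω) ∂μ
      = (1 - x ^ 2) ^ ((m * N : ℝ) / 2)
        * ∫ ω', ((1 / 2) * A ^ ((Q ω' : ℝ) - (N : ℝ) / 2)
            + (1 / 2) * A ^ ((N : ℝ) / 2 - (Q ω' : ℝ))) ^ m ∂μ' := by
  have hLHS := integral_comp_rademacher (Sum.forall.2 ⟨hmX, hmW⟩) hindep
    (Sum.forall.2 ⟨hRadX, hRadW⟩) fun y => ∏ i, ∏ j, (1 + x * y (.inl i) * y (.inr j))
  simp only [Sum.elim_inl, Sum.elim_inr, sum_prod_one_add_mul_signVec_mul_signVec,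
    Fintype.card_sum, Fintype.card_fin] at hLHS
  rw [hLHS, integral_comp_of_binomial hmQ hQ
      fun q => (1 / 2 * A ^ ((q : ℝ) - N / 2) + 1 / 2 * A ^ ((N : ℝ) / 2 - q)) ^ m,
    mul_sum, mul_sum]
  refine sum_congr rfl fun q hq => ?_
  have hrpow : ((1 - x ^ 2) ^ ((N : ℝ) / 2)) ^ m = (1 - x ^ 2) ^ ((m * N : ℝ) / 2) := by
    rw [← Real.rpow_natCast, ← Real.rpow_mul (by nlinarith), mul_comm, mul_div_assoc]
  have hterm : (1 / 2) ^ m * ((1 + x) ^ q * (1 - x) ^ (N - q) + (1 - x) ^ q * (1 + x) ^ (N - q)) ^ m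
      = (1 - x ^ 2) ^ ((m * N : ℝ) / 2)
        * (1 / 2 * A ^ ((q : ℝ) - N / 2) + 1 / 2 * A ^ ((N : ℝ) / 2 - q)) ^ m := by
    rw [← mul_pow, half_mul_pow_add_pow_eq_rpow (by linarith) (by linarith)
      (Nat.lt_succ_iff.1 (mem_range.1 hq)), mul_pow, ← hA,
      show (1 + x) * (1 - x) = 1 - x ^ 2 by ring, hrpow]
  rw [pow_add]
  linear_combination ((N.choose q : ℝ) * (1 / 2) ^ N) * hterm
end

section
/- In the Bernoulli observation model, the chi-squared affinity satisfies E_{Y∼ν₀}[L²] = E_{M,M'∼π} ∏_{i,j} (1 + p M_{ij} M'_{ij}), where L is the likelihood ratio dν₁/dν₀, M' is an independent copy of M, and entries |M_{ij}| ≤ 1. -/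
open MeasureTheory

/-- Chi-squared affinity identity in the Bernoulli observation model:
outcomes are coded by `Fin 3`, with `0 ↦ -1`, `1 ↦ 0`, `2 ↦ 1`. -/
theorem stmt_7
    {ι : Type*} [Fintype ι] [DecidableEq ι]
    (p : ℝ) (hp : 0 < p) (hp1 : p < 1)
    (π : Measure (ι → ℝ)) [IsProbabilityMeasure π]
    (hbound : ∀ᵐ M ∂π, ∀ i, |M i| ≤ 1)
    (f : (ι → ℝ) → (ι → Fin 3) → ℝ)
    (hf : ∀ M y, f M y = ∏ i,
        ((1 - p) * (if y i = 1 then 1 else 0)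
          + p * (1 + M i) / 2 * (if y i = 2 then 1 else 0)
          + p * (1 - M i) / 2 * (if y i = 0 then 1 else 0)))
    (L : (ι → Fin 3) → ℝ)
    (hL : ∀ y, L y = (∫ M, f M y ∂π) / f (fun _ => 0) y) :
    ∑ y : ι → Fin 3, f (fun _ => 0) y * (L y) ^ 2
      = ∫ M, ∫ M', ∏ i, (1 + p * M i * M' i) ∂π ∂π := by
  set g : ℝ → Fin 3 → ℝ := fun m a =>
      (1 - p) * (if a = 1 then 1 else 0)
        + p * (1 + m) / 2 * (if a = 2 then 1 else 0)
        + p * (1 - m) / 2 * (if a = 0 then 1 else 0) with hg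
  have hf' : ∀ M y, f M y = ∏ i, g (M i) (y i) := hf
  -- positivity of null-model factors
  have hg0 : ∀ a : Fin 3, 0 < g 0 a := by
    intro a; fin_cases a <;> simp [hg] <;> linarith
  have hf0pos : ∀ y, 0 < f (fun _ => 0) y := by
    intro y; rw [hf']; exact Finset.prod_pos fun i _ => hg0 (y i)
  -- per-coordinate identity
  have hkey : ∀ m m' : ℝ, ∑ a : Fin 3, g m a * g m' a / g 0 a = 1 + p * m * m' := by
    intro m m'
    have h1 : (1:ℝ) - p ≠ 0 := by linarith
    have h2 : p ≠ 0 := ne_of_gt hp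
    simp [hg, Fin.sum_univ_three]
    field_simp
    ring
  -- full identity
  have hkey2 : ∀ M M' : ι → ℝ,
      ∑ y : ι → Fin 3, f M y * f M' y / f (fun _ => 0) y
        = ∏ i, (1 + p * M i * M' i) := by
    intro M M'
    have : ∀ y : ι → Fin 3, f M y * f M' y / f (fun _ => 0) y
        = ∏ i, (g (M i) (y i) * g (M' i) (y i) / g 0 (y i)) := by
      intro y
      rw [hf', hf', hf', ← Finset.prod_mul_distrib, ← Finset.prod_div_distrib]
    simp_rw [this]
    calc ∑ y : ι → Fin 3, ∏ i, (g (M i) (y i) * g (M' i) (y i) / g 0 (y i))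
        = ∑ y ∈ Fintype.piFinset (fun _ : ι => (Finset.univ : Finset (Fin 3))),
            ∏ i, (g (M i) (y i) * g (M' i) (y i) / g 0 (y i)) := by
          rw [Fintype.piFinset_univ]
      _ = ∏ i, ∑ a : Fin 3, g (M i) a * g (M' i) a / g 0 a :=
          (Finset.prod_univ_sum (fun _ : ι => (Finset.univ : Finset (Fin 3)))
            (fun i a => g (M i) a * g (M' i) a / g 0 a)).symm
      _ = ∏ i, (1 + p * M i * M' i) :=
          Finset.prod_congr rfl fun i _ => hkey (M i) (M' i)
  -- measurability
  have hmeas : ∀ y, Measurable (fun M : ι → ℝ => f M y) := by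
    intro y
    simp only [hf']
    exact Finset.measurable_prod _ fun i _ => by
      simp only [hg]
      have hmi : Measurable fun M : ι → ℝ => M i := measurable_pi_apply i
      fun_prop
  -- integrability with bound 1
  have hint : ∀ y, Integrable (fun M : ι → ℝ => f M y) π := by
    intro y
    refine ⟨(hmeas y).aestronglyMeasurable, ?_⟩
    refine HasFiniteIntegral.mono' (g := fun _ => (1:ℝ)) (integrable_const (1:ℝ)).2 ?_
    filter_upwards [hbound] with M hM
    rw [hf']
    have hcases : ∀ a : Fin 3, a = 0 ∨ a = 1 ∨ a = 2 := by decide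
    have h1 : ∀ i, 0 ≤ g (M i) (y i) ∧ g (M i) (y i) ≤ 1 := by
      intro i
      have hb := abs_le.mp (hM i)
      rcases hcases (y i) with h | h | h <;>
        constructor <;> simp [hg, h] <;> nlinarith [hb.1, hb.2]
    rw [Real.norm_eq_abs, abs_of_nonneg (Finset.prod_nonneg fun i _ => (h1 i).1)]
    exact Finset.prod_le_one (fun i _ => (h1 i).1) (fun i _ => (h1 i).2)
  set I : (ι → Fin 3) → ℝ := fun y => ∫ M, f M y ∂π with hI
  calc ∑ y : ι → Fin 3, f (fun _ => 0) y * (L y) ^ 2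
      = ∑ y : ι → Fin 3, ∫ M, f M y * (I y / f (fun _ => 0) y) ∂π := by
        refine Finset.sum_congr rfl fun y _ => ?_
        rw [integral_mul_const, hL]
        have h0 := (hf0pos y).ne'
        field_simp
        ring
    _ = ∫ M, ∑ y : ι → Fin 3, f M y * (I y / f (fun _ => 0) y) ∂π := by
        rw [integral_finset_sum]
        exact fun y _ => (hint y).mul_const _
    _ = ∫ M, ∫ M', ∏ i, (1 + p * M i * M' i) ∂π ∂π := by
        refine integral_congr_ae (Filter.Eventually.of_forall fun M => ?_)
        have : ∀ y : ι → Fin 3, f M y * (I y / f (fun _ => 0) y)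
            = ∫ M', f M y * f M' y / f (fun _ => 0) y ∂π := by
          intro y
          have : (fun M' => f M y * f M' y / f (fun _ => 0) y)
              = fun M' => f M' y * (f M y / f (fun _ => 0) y) := by
            funext M'; ring
          rw [this, integral_mul_const, hI]
          ring
        simp_rw [this]
        rw [← integral_finset_sum]
        · exact integral_congr_ae (Filter.Eventually.of_forall fun M' => hkey2 M M')
        · intro y _
          have : (fun M' => f M y * f M' y / f (fun _ => 0) y)
              = fun M' => f M' y * (f M y / f (fun _ => 0) y) := by
            funext M'; ring
          rw [this]
          exact (hint y).mul_const _
end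

section
/- Let R be an m×k matrix with i.i.d. Rademacher entries, u > 0, and M the m×m matrix whose columns ((i−1)m/k + 1) through im/k all equal u r_i (r_i = the i-th column of R), i = 1,...,k. Then rank(M) ≤ k, ‖M‖_∞ = u, and for any m×m matrix A of rank at most k₀ < k, ‖M − A‖_F² ≥ (m²u²/k)(k − k₀) σ_min(R/√m)², where σ_min denotes the smallest singular value. -/
/-!
Write `d = m / k` and let `G` be the `k × m` matrix with `G a j = [g j = a]`. Then `M = u R G` and
`G Gᵀ = d • 1`, so `Q = Gᵀ / √d` has orthonormal columns and `M Q = u √d R`. If `rank A ≤ k₀`, the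
kernel of `A Q` contains `k - k₀` orthonormal vectors `v_t`; the vectors `Q v_t` are orthonormal and
killed by `A`, so Bessel's inequality applied to each row of `M - A` gives
`∑_t ‖M Q v_t‖² ≤ ‖M - A‖_F²`, and each term is at least `u² d m smin²`.
-/
open Matrix Finset

theorem Matrix.exists_orthonormal_mulVec_eq_zero {ι n : Type*} [Fintype n] (A : Matrix ι n ℝ)
    {r : ℕ} (hA : A.rank ≤ r) :
    ∃ v : Fin (Fintype.card n - r) → EuclideanSpace ℝ n,
      Orthonormal ℝ v ∧ ∀ t, A *ᵥ (v t).ofLp = 0 := by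
  set f := A.mulVecLin ∘ₗ (WithLp.linearEquiv 2 ℝ (n → ℝ)).toLinearMap
  have hrange : Module.finrank ℝ (LinearMap.range f) = A.rank := by
    rw [LinearMap.range_comp_of_range_eq_top _ (LinearEquiv.range _)]; rfl
  have hker : Fintype.card n - r ≤ Module.finrank ℝ (LinearMap.ker f) := by
    have := f.finrank_range_add_finrank_ker
    rw [hrange, finrank_euclideanSpace] at this
    omega
  let b := stdOrthonormalBasis ℝ (LinearMap.ker f)
  refine ⟨fun t => b (Fin.castLE hker t), ?_, fun t => (b _).2⟩
  exact (b.orthonormal.comp_linearIsometry (LinearMap.ker f).subtypeₗᵢ).comp _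
    (Fin.castLE_injective hker)

theorem Matrix.sum_dotProduct_mulVec_le_sum_sq_sub {ι n τ : Type*} [Fintype ι] [Fintype n]
    [Fintype τ] (X A : Matrix ι n ℝ) {v : τ → EuclideanSpace ℝ n} (hv : Orthonormal ℝ v)
    (hAv : ∀ t, A *ᵥ (v t).ofLp = 0) :
    ∑ t, (X *ᵥ (v t).ofLp) ⬝ᵥ (X *ᵥ (v t).ofLp) ≤ ∑ i, ∑ j, (X i j - A i j) ^ 2 := by
  have hrow : ∀ i, ∑ t, (X *ᵥ (v t).ofLp) i ^ 2 ≤ ∑ j, (X i j - A i j) ^ 2 := by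
    intro i
    set y := WithLp.toLp 2 ((X - A) i)
    have hinner : ∀ t, inner ℝ (v t) y = (X *ᵥ (v t).ofLp) i := by
      intro t
      have hA : A i ⬝ᵥ (v t).ofLp = 0 := congrFun (hAv t) i
      rw [EuclideanSpace.inner_eq_star_dotProduct, star_trivial]
      change (X i - A i) ⬝ᵥ (v t).ofLp = X i ⬝ᵥ (v t).ofLp
      rw [sub_dotProduct, hA, sub_zero]
    have hy : ‖y‖ ^ 2 = ∑ j, (X i j - A i j) ^ 2 := by
      simp [y, EuclideanSpace.norm_eq, Real.sq_sqrt (Finset.sum_nonneg fun _ _ => sq_nonneg _)]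
    simpa [hinner, hy] using hv.sum_inner_products_le y (s := univ)
  calc ∑ t, (X *ᵥ (v t).ofLp) ⬝ᵥ (X *ᵥ (v t).ofLp)
      = ∑ i, ∑ t, (X *ᵥ (v t).ofLp) i ^ 2 := by
        simp only [dotProduct, ← sq]; exact Finset.sum_comm
    _ ≤ _ := Finset.sum_le_sum fun i _ => hrow i

theorem Orthonormal.toLp_mulVec {n κ τ : Type*} [Fintype n] [Fintype κ] [DecidableEq κ]
    {Q : Matrix n κ ℝ} (hQ : Qᵀ * Q = 1) {v : τ → EuclideanSpace ℝ κ} (hv : Orthonormal ℝ v) :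
    Orthonormal ℝ fun t => WithLp.toLp 2 (Q *ᵥ (v t).ofLp) := by
  classical
  rw [orthonormal_iff_ite] at hv ⊢
  intro s t
  rw [← hv s t, EuclideanSpace.inner_eq_star_dotProduct, EuclideanSpace.inner_eq_star_dotProduct]
  simp only [star_trivial]
  rw [dotProduct_mulVec, ← vecMul_transpose, vecMul_vecMul, hQ, vecMul_one, dotProduct_comm]

theorem Matrix.card_sub_mul_le_sum_sq_sub {ι n κ : Type*} [Fintype ι] [Fintype n] [Fintype κ]
    [DecidableEq κ] (X A : Matrix ι n ℝ) {Q : Matrix n κ ℝ} (hQ : Qᵀ * Q = 1) {r : ℕ}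
    (hA : A.rank ≤ r) {σ : ℝ} (hσ : ∀ x, x ⬝ᵥ x = 1 → σ ≤ ((X * Q) *ᵥ x) ⬝ᵥ ((X * Q) *ᵥ x)) :
    ((Fintype.card κ - r : ℕ) : ℝ) * σ ≤ ∑ i, ∑ j, (X i j - A i j) ^ 2 := by
  obtain ⟨v, hv, hAQv⟩ := (A * Q).exists_orthonormal_mulVec_eq_zero
    ((rank_mul_le_left A Q).trans hA)
  have hunit : ∀ t, (v t).ofLp ⬝ᵥ (v t).ofLp = 1 := fun t => by
    have := orthonormal_iff_ite.mp hv t t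
    rwa [if_pos rfl, EuclideanSpace.inner_eq_star_dotProduct, star_trivial] at this
  calc ((Fintype.card κ - r : ℕ) : ℝ) * σ = ∑ _t : Fin (Fintype.card κ - r), σ := by simp
    _ ≤ ∑ t, ((X * Q) *ᵥ (v t).ofLp) ⬝ᵥ ((X * Q) *ᵥ (v t).ofLp) :=
        sum_le_sum fun t _ => hσ _ (hunit t)
    _ ≤ _ := by
        simpa only [← mulVec_mulVec] using
          X.sum_dotProduct_mulVec_le_sum_sq_sub A (hv.toLp_mulVec hQ)
            (by simpa only [mulVec_mulVec] using hAQv)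

theorem Matrix.card_sub_mul_le_sum_sq_mul_sub {ι n κ : Type*} [Fintype ι] [Fintype n] [Fintype κ]
    [DecidableEq κ] (N : Matrix ι κ ℝ) {G : Matrix κ n ℝ} {d : ℝ} (hG : G * Gᵀ = d • 1)
    (hd : 0 < d) (A : Matrix ι n ℝ) {r : ℕ} (hA : A.rank ≤ r) {σ : ℝ}
    (hσ : ∀ x, x ⬝ᵥ x = 1 → σ ≤ (N *ᵥ x) ⬝ᵥ (N *ᵥ x)) :
    ((Fintype.card κ - r : ℕ) : ℝ) * (d * σ) ≤ ∑ i, ∑ j, ((N * G) i j - A i j) ^ 2 := by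
  have hsqrt : √d * √d = d := Real.mul_self_sqrt hd.le
  set Q := (√d)⁻¹ • Gᵀ
  have hQ : Qᵀ * Q = 1 := by
    rw [transpose_smul, transpose_transpose, Matrix.smul_mul, Matrix.mul_smul, hG, smul_smul,
      smul_smul]
    convert one_smul ℝ (1 : Matrix κ κ ℝ) using 2
    field_simp
    rw [Real.sq_sqrt hd.le]
  have hNGQ : N * G * Q = √d • N := by
    rw [Matrix.mul_smul, Matrix.mul_assoc, hG, Matrix.mul_smul, Matrix.mul_one, smul_smul]
    congr 1
    field_simp
    rw [Real.sq_sqrt hd.le]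
  refine (N * G).card_sub_mul_le_sum_sq_sub A hQ hA fun x hx => ?_
  rw [hNGQ, smul_mulVec, smul_dotProduct, dotProduct_smul, smul_eq_mul, smul_eq_mul, ← mul_assoc,
    hsqrt]
  exact mul_le_mul_of_nonneg_left (hσ x hx) hd.le

theorem Fin.card_filter_eq_of_val_eq_div {k d m : ℕ} (hm : k * d = m) {g : Fin m → Fin k}
    (hg : ∀ j, (g j : ℕ) = j / d) (a : Fin k) : #{j | g j = a} = d := by
  have hgp : ∀ p : Fin k × Fin d, g (finCongr hm (finProdFinEquiv p)) = p.1 := by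
    intro p
    ext
    rw [hg, finCongr_apply, Fin.val_cast, finProdFinEquiv_apply_val,
      Nat.add_mul_div_left _ _ p.2.pos, Nat.div_eq_of_lt p.2.isLt, zero_add]
  rw [card_filter, ← (finProdFinEquiv.trans (finCongr hm)).sum_comp]
  simp only [Equiv.trans_apply, hgp, Fintype.sum_prod_type]
  simp [apply_ite Finset.card]

theorem Matrix.submatrix_one_mul_transpose {α β R : Type*} [Fintype α] [DecidableEq β]
    [NonAssocSemiring R] {g : α → β} {d : ℕ} (hg : ∀ b, #{j | g j = b} = d) :
    (1 : Matrix β β R).submatrix id g * ((1 : Matrix β β R).submatrix id g)ᵀ = (d : R) • 1 := by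
  ext a b
  simp only [mul_apply, submatrix_apply, transpose_apply, id, one_apply, smul_apply,
    smul_eq_mul, mul_boole]
  split_ifs with hab
  · subst hab
    rw [← hg a, ← sum_boole]
    exact sum_congr rfl fun j _ => by grind
  · refine sum_eq_zero fun j _ => ?_
    grind

theorem stmt_18_general
    (m k k₀ : ℕ) (hk : 0 < k) (hk₀ : k₀ < k) (hm : 0 < m) (hdvd : k ∣ m)
    (u : ℝ) (hu : 0 < u)
    (R : Matrix (Fin m) (Fin k) ℝ) (hR : ∀ i j, R i j = 1 ∨ R i j = -1)
    (g : Fin m → Fin k) (hg : ∀ j, (g j : ℕ) = (j : ℕ) / (m / k))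
    (M : Matrix (Fin m) (Fin m) ℝ) (hM : ∀ i j, M i j = u * R i (g j))
    (smin : ℝ)
    (hsmin : ∀ x : Fin k → ℝ, (∑ j, (x j) ^ 2) = 1 →
      smin ^ 2 ≤ ∑ i, (R.mulVec x i / Real.sqrt m) ^ 2) :
    M.rank ≤ k ∧ (∀ i j, |M i j| = u) ∧
    (∀ A : Matrix (Fin m) (Fin m) ℝ, A.rank ≤ k₀ →
      ((m : ℝ) ^ 2 * u ^ 2 / k) * ((k : ℝ) - k₀) * smin ^ 2
        ≤ ∑ i, ∑ j, (M i j - A i j) ^ 2) := by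
  set d := m / k
  set G := (1 : Matrix (Fin k) (Fin k) ℝ).submatrix id g
  have hMG : M = (u • R) * G := by
    ext i j
    simp [G, hM, mul_apply, one_apply]
  refine ⟨?_, fun i j => ?_, fun A hA => ?_⟩
  · rw [hMG]
    exact (rank_mul_le_left _ _).trans (rank_le_width _)
  · rcases hR i (g j) with h | h <;> simp [hM, h, abs_of_pos hu]
  have hGG : G * Gᵀ = (d : ℝ) • 1 :=
    submatrix_one_mul_transpose (Fin.card_filter_eq_of_val_eq_div (Nat.mul_div_cancel' hdvd) hg)
  have hd : (d : ℝ) = m / k := Nat.cast_div hdvd (by positivity)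
  have hσ : ∀ x, x ⬝ᵥ x = 1 → u ^ 2 * (m * smin ^ 2) ≤ ((u • R) *ᵥ x) ⬝ᵥ ((u • R) *ᵥ x) := by
    intro x hx
    have h := hsmin x (by simpa [dotProduct, sq] using hx)
    simp only [div_pow, Real.sq_sqrt (Nat.cast_nonneg m), ← sum_div] at h
    rw [le_div_iff₀ (by positivity)] at h
    rw [smul_mulVec, smul_dotProduct, dotProduct_smul, smul_eq_mul, smul_eq_mul, ← mul_assoc u u,
      ← sq]
    gcongr
    simpa [dotProduct, sq, mul_comm] using h
  have := (u • R).card_sub_mul_le_sum_sq_mul_sub hGG (by rw [hd]; positivity) A hA hσ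
  rw [← hMG, Fintype.card_fin, Nat.cast_sub hk₀.le, hd] at this
  convert this using 1
  field_simp

/-- Properties of the block Rademacher prior matrix: rank at most `k`,
entries of modulus `u`, and a Frobenius-distance lower bound to rank-`k₀`
matrices in terms of the smallest singular value of `R/√m`. -/
theorem stmt_18
    (m k k₀ : ℕ) (hk : 0 < k) (hk₀ : k₀ < k) (hm : 0 < m) (hdvd : k ∣ m)
    (u : ℝ) (hu : 0 < u)
    (R : Matrix (Fin m) (Fin k) ℝ) (hR : ∀ i j, R i j = 1 ∨ R i j = -1)
    (g : Fin m → Fin k) (hg : ∀ j, (g j : ℕ) = (j : ℕ) / (m / k))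
    (M : Matrix (Fin m) (Fin m) ℝ) (hM : ∀ i j, M i j = u * R i (g j))
    (smin : ℝ) (hsminnn : 0 ≤ smin)
    (hsmin : ∀ x : Fin k → ℝ, (∑ j, (x j) ^ 2) = 1 →
      smin ^ 2 ≤ ∑ i, (R.mulVec x i / Real.sqrt m) ^ 2) :
    M.rank ≤ k ∧ (∀ i j, |M i j| = u) ∧
    (∀ A : Matrix (Fin m) (Fin m) ℝ, A.rank ≤ k₀ →
      ((m : ℝ) ^ 2 * u ^ 2 / k) * ((k : ℝ) - k₀) * smin ^ 2
        ≤ ∑ i, ∑ j, (M i j - A i j) ^ 2) :=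
  stmt_18_general m k k₀ hk hk₀ hm hdvd u hu R hR g hg M hM smin hsmin
end
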